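/- Let k ≥ 2 and p ∈ Δ_k with p_1 = max_{1≤j≤k} p_j and z(p) ≥ 0, where z(x) = x_{k+1} − Σ_{i=2}^k x_i. Then for every n ≥ 0, z(F^n(p)) ≥ z(p)^{2^n}. (In particular, there is no uniform rate of convergence in Theorem 1: if z(p) = 2^{−2^{−n}} then z(F^n(p)) ≥ 1/2.) -/

import Mathlib

open Filter Topology

/-- The map F on ℝ^{k+1} (coordinates indexed 0,…,k; the last coordinate is the
"empty" state).  For i < k, F_i(x) = x_i² + 2 x_i x_k; the last coordinate is
F_k(x) = x_k² + 2 Σ_{a<b<k} x_a x_b. -/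
noncomputable def Fmap (k : ℕ) (x : Fin (k + 1) → ℝ) : Fin (k + 1) → ℝ :=
  fun i =>
    if i.val < k then x i ^ 2 + 2 * x i * x (Fin.last k)
    else x (Fin.last k) ^ 2 +
      2 * ∑ a : Fin (k + 1), ∑ b : Fin (k + 1),
        (if a.val < b.val ∧ b.val < k then x a * x b else 0)

/-- The open simplex Δ_k ⊆ ℝ^{k+1}. -/
def simplex (k : ℕ) : Set (Fin (k + 1) → ℝ) :=
  {p | (∑ i, p i) = 1 ∧ ∀ i, 0 < p i}

/-- z(x) = x_{k+1} − Σ_{i=2}^k x_i (0-indexed: last coordinate minus the sum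
of coordinates 1,…,k−1). -/
noncomputable def zfun (k : ℕ) (x : Fin (k + 1) → ℝ) : ℝ :=
  x (Fin.last k) - ∑ j : Fin (k + 1), if 1 ≤ j.val ∧ j.val < k then x j else 0

/-!
With coordinates indexed from `0`, one has the identity
`z(F x) = z(x)² + 2 ∑_{1 ≤ i < k} x_i (x_0 - x_i)`.
Its correction term is nonnegative as long as `x ≥ 0` and `x_0` is maximal among `x_0, …, x_{k-1}`,
and this condition is preserved by `F` because `F_i - F_j = (x_i - x_j)(x_i + x_j + 2 x_k)`.
Iterating `z(F x) ≥ z(x)² ≥ 0` gives `z(Fⁿ x) ≥ z(x)^(2ⁿ)`.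
-/

theorem Finset.sq_sum_eq_sum_sq_add_two_mul_sum_lt {ι R : Type*} [LinearOrder ι] [CommRing R]
    (s : Finset ι) (f : ι → R) :
    (∑ i ∈ s, f i) ^ 2 = ∑ i ∈ s, f i ^ 2 + 2 * ∑ a ∈ s, ∑ b ∈ s, if a < b then f a * f b else 0 := by
  have hsplit : ∀ a b, f a * f b = (if a = b then f a ^ 2 else 0) + (if a < b then f a * f b else 0)
      + (if b < a then f b * f a else 0) := by
    intro a b
    rcases lt_trichotomy a b with h | rfl | h
    · simp [h, h.ne, h.not_gt]
    · simp [sq]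
    · simp [h, h.ne', h.not_gt, mul_comm]
  calc (∑ i ∈ s, f i) ^ 2 = ∑ a ∈ s, ∑ b ∈ s, f a * f b := by rw [sq, Finset.sum_mul_sum]
    _ = ∑ a ∈ s, ∑ b ∈ s, ((if a = b then f a ^ 2 else 0) + (if a < b then f a * f b else 0)
          + (if b < a then f b * f a else 0)) := by simp_rw [← hsplit]
    _ = _ := by
      simp only [Finset.sum_add_distrib, Finset.sum_ite_eq,
        Finset.sum_comm (γ := ι) (f := fun a b => if b < a then f b * f a else 0)]
      rw [Finset.sum_ite_mem, Finset.inter_self]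
      ring

section

variable {k : ℕ}

lemma Fmap_of_lt (x : Fin (k + 1) → ℝ) {i : Fin (k + 1)} (hi : i.val < k) :
    Fmap k x i = x i ^ 2 + 2 * x i * x (Fin.last k) := if_pos hi

lemma sum_pairs_eq_sum_filter_lt (x : Fin (k + 1) → ℝ) :
    ∑ a : Fin (k + 1), ∑ b : Fin (k + 1), (if a.val < b.val ∧ b.val < k then x a * x b else 0)
      = ∑ a with a.val < k, ∑ b with b.val < k, if a < b then x a * x b else 0 := by
  simp only [Finset.sum_filter]
  refine Finset.sum_congr rfl fun a _ => ?_
  split_ifs with ha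
  · refine Finset.sum_congr rfl fun b _ => ?_
    by_cases hb : b.val < k <;> simp [hb]
  · exact Finset.sum_eq_zero fun b _ => if_neg fun h => ha (h.1.trans h.2)

lemma Fmap_last (x : Fin (k + 1) → ℝ) :
    Fmap k x (Fin.last k) = x (Fin.last k) ^ 2
      + ((∑ i with i.val < k, x i) ^ 2 - ∑ i with i.val < k, x i ^ 2) := by
  rw [Finset.sq_sum_eq_sum_sq_add_two_mul_sum_lt, ← sum_pairs_eq_sum_filter_lt]
  simp [Fmap]

lemma zfun_eq (x : Fin (k + 1) → ℝ) :
    zfun k x = x (Fin.last k) - ∑ i with 1 ≤ i.val ∧ i.val < k, x i := by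
  rw [zfun, Finset.sum_filter]

lemma sum_filter_val_lt (hk : 0 < k) (f : Fin (k + 1) → ℝ) :
    ∑ i with i.val < k, f i = f 0 + ∑ i with 1 ≤ i.val ∧ i.val < k, f i := by
  have hset : Finset.univ.filter (fun i : Fin (k + 1) => i.val < k)
      = insert 0 (Finset.univ.filter fun i : Fin (k + 1) => 1 ≤ i.val ∧ i.val < k) := by
    ext i
    simp only [Finset.mem_filter, Finset.mem_univ, true_and, Finset.mem_insert, Fin.ext_iff,
      Fin.val_zero]
    omega
  rw [hset, Finset.sum_insert (by simp)]

lemma zfun_Fmap (x : Fin (k + 1) → ℝ) :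
    zfun k (Fmap k x) = zfun k x ^ 2 + 2 * ∑ i with 1 ≤ i.val ∧ i.val < k, x i * (x 0 - x i) := by
  obtain rfl | hk := k.eq_zero_or_pos
  · simp [zfun, Fmap]
  have hsum : ∑ i with 1 ≤ i.val ∧ i.val < k, Fmap k x i
      = ∑ i with 1 ≤ i.val ∧ i.val < k, (x i ^ 2 + 2 * x i * x (Fin.last k)) :=
    Finset.sum_congr rfl fun i hi => Fmap_of_lt x (Finset.mem_filter.1 hi).2.2
  rw [zfun_eq, zfun_eq, Fmap_last, hsum, sum_filter_val_lt hk, sum_filter_val_lt hk]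
  simp only [Finset.sum_add_distrib, ← Finset.sum_mul, ← Finset.mul_sum, mul_sub,
    Finset.sum_sub_distrib, ← sq]
  ring

lemma Fmap_nonneg {x : Fin (k + 1) → ℝ} (hx : ∀ i, 0 ≤ x i) (i : Fin (k + 1)) :
    0 ≤ Fmap k x i := by
  unfold Fmap
  split_ifs
  · have := hx i; have := hx (Fin.last k); positivity
  · refine add_nonneg (sq_nonneg _) (mul_nonneg zero_le_two ?_)
    exact Finset.sum_nonneg fun a _ => Finset.sum_nonneg fun b _ =>
      ite_nonneg (mul_nonneg (hx a) (hx b)) le_rfl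

lemma Fmap_sub_Fmap (x : Fin (k + 1) → ℝ) {i j : Fin (k + 1)} (hi : i.val < k) (hj : j.val < k) :
    Fmap k x i - Fmap k x j = (x i - x j) * (x i + x j + 2 * x (Fin.last k)) := by
  rw [Fmap_of_lt x hi, Fmap_of_lt x hj]
  ring

def nonnegFirstMax (k : ℕ) : Set (Fin (k + 1) → ℝ) :=
  {x | (∀ i, 0 ≤ x i) ∧ ∀ j : Fin (k + 1), j.val < k → x j ≤ x 0}

lemma mapsTo_Fmap_nonnegFirstMax : Set.MapsTo (Fmap k) (nonnegFirstMax k) (nonnegFirstMax k) := by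
  rintro x ⟨hx, hmax⟩
  refine ⟨Fmap_nonneg hx, fun j hj => sub_nonneg.1 ?_⟩
  rw [Fmap_sub_Fmap x ((Nat.zero_le _).trans_lt hj) hj]
  exact mul_nonneg (sub_nonneg.2 (hmax j hj))
    (by have := hx j; have := hx 0; have := hx (Fin.last k); positivity)

lemma sq_zfun_le_zfun_Fmap {x : Fin (k + 1) → ℝ} (hx : x ∈ nonnegFirstMax k) :
    zfun k x ^ 2 ≤ zfun k (Fmap k x) := by
  rw [zfun_Fmap, le_add_iff_nonneg_right]
  refine mul_nonneg zero_le_two (Finset.sum_nonneg fun i hi => ?_)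
  exact mul_nonneg (hx.1 i) (sub_nonneg.2 (hx.2 i (Finset.mem_filter.1 hi).2.2))

lemma zfun_pow_two_pow_le_zfun_iterate {x : Fin (k + 1) → ℝ} (hx : x ∈ nonnegFirstMax k) (n : ℕ) :
    zfun k x ^ 2 ^ n ≤ zfun k ((Fmap k)^[n] x) := by
  induction n generalizing x with
  | zero => simp
  | succ n ih =>
    rw [pow_succ', pow_mul, Function.iterate_succ_apply]
    exact (pow_le_pow_left₀ (sq_nonneg _) (sq_zfun_le_zfun_Fmap hx) _).trans
      (ih (mapsTo_Fmap_nonnegFirstMax hx))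

end

theorem zfun_lower_bound_general (k : ℕ) (p : Fin (k + 1) → ℝ)
    (hp : p ∈ simplex k)
    (hmax : ∀ j : Fin (k + 1), j.val < k → p j ≤ p 0) :
    ∀ n : ℕ, zfun k p ^ 2 ^ n ≤ zfun k ((Fmap k)^[n] p) :=
  zfun_pow_two_pow_le_zfun_iterate ⟨fun i => (hp.2 i).le, hmax⟩

/-- If p ∈ Δ_k with p_1 = max_{1≤j≤k} p_j and z(p) ≥ 0, then for every n ≥ 0,
z(F^n(p)) ≥ z(p)^{2^n}. -/
theorem zfun_lower_bound (k : ℕ) (hk : 2 ≤ k) (p : Fin (k + 1) → ℝ)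
    (hp : p ∈ simplex k)
    (hmax : ∀ j : Fin (k + 1), j.val < k → p j ≤ p 0)
    (hz : 0 ≤ zfun k p) :
    ∀ n : ℕ, zfun k p ^ 2 ^ n ≤ zfun k ((Fmap k)^[n] p) :=
  zfun_lower_bound_general k p hp hmax
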